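/- arXiv:2510.01759 — 2 statements merged into one kernel-verified Lean document; each statement's English description precedes it below -/
import Mathlib

section
/- Let μ ∈ Δ(S) and let τ ∈ T_μ attain the supremum sup_{τ' ∈ T_μ} ∫_{Δ(S)} W(ν) dτ'(ν). Suppose τ = r τ₁ + (1−r) τ₂ with r ∈ (0,1), τ₁ ∈ T_{μ₁}, τ₂ ∈ T_{μ₂} (so μ = r μ₁ + (1−r) μ₂). Then τ₁ attains sup_{τ' ∈ T_{μ₁}} ∫_{Δ(S)} W(ν) dτ'(ν) and τ₂ attains sup_{τ' ∈ T_{μ₂}} ∫_{Δ(S)} W(ν) dτ'(ν). -/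
open MeasureTheory Finset

noncomputable section

/-- Expected utility `Σ_s u(s,a) ν(s)` of action `a` under belief `ν ∈ Δ(S)`. -/
def expUtil {S α : Type*} [Fintype S] (u : S → α → ℝ) (ν : stdSimplex ℝ S) (a : α) : ℝ :=
  ∑ s, u s a * (ν : S → ℝ) s

/-- Admissible (optimal) actions `A*(ν) = argmax_a Σ_s u(s,a) ν(s)`. -/
def admissible {S α : Type*} [Fintype S] (u : S → α → ℝ) (ν : stdSimplex ℝ S) : Set α :=
  {a | ∀ b, expUtil u ν b ≤ expUtil u ν a}

/-- The sender's gain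
`W(ν) = Σ_t η(t) · max_{a ∈ A*_t(ν)} Σ_s v(s,a) ν(s)` (ties broken in the sender's favor);
the maximum over the (finite nonempty) set of admissible action profiles is expressed as a
supremum. -/
def senderGain {S L : Type*} [Fintype S] [Fintype L] [DecidableEq L]
    {A T : L → Type*} [∀ l, Fintype (A l)] [∀ l, Fintype (T l)]
    (u : ∀ l, T l → S → A l → ℝ) (v : S → (∀ l, A l) → ℝ) (η : ∀ l, T l → ℝ)
    (ν : stdSimplex ℝ S) : ℝ :=
  ∑ t : ∀ l, T l, (∏ l, η l (t l)) *
    sSup {x : ℝ | ∃ a : ∀ l, A l, (∀ l, a l ∈ admissible (u l (t l)) ν) ∧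
      x = ∑ s, v s a * (ν : S → ℝ) s}

/-- `T_μ` : Borel probability measures on `Δ(S)` with barycenter `μ`, with the topology of
weak convergence. -/
def barycentric {S : Type*} [Fintype S] (μ : stdSimplex ℝ S) :
    Set (ProbabilityMeasure (stdSimplex ℝ S)) :=
  {τ | ∀ s : S, (∫ ν, (ν : S → ℝ) s ∂(τ : Measure (stdSimplex ℝ S))) = (μ : S → ℝ) s}

/-!
If some `τ'` with barycenter `μ₁` did better than `τ₁`, then the mixture `r τ' + (1 - r) τ₂`
would have barycenter `μ` and, the integral being affine in the measure, would do strictly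
better than `τ`. The only analytic input is that `W` is bounded and measurable, so that all
these integrals are finite.
-/

namespace MeasureTheory.ProbabilityMeasure

variable {X : Type*} [MeasurableSpace X]

def mix (r : ℝ) (hr0 : 0 ≤ r) (hr1 : r ≤ 1) (P Q : ProbabilityMeasure X) :
    ProbabilityMeasure X :=
  ⟨ENNReal.ofReal r • (P : Measure X) + ENNReal.ofReal (1 - r) • (Q : Measure X),
    ⟨by simp [← ENNReal.ofReal_add hr0 (sub_nonneg.2 hr1)]⟩⟩

@[simp]
lemma toMeasure_mix (r : ℝ) (hr0 : 0 ≤ r) (hr1 : r ≤ 1) (P Q : ProbabilityMeasure X) :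
    (mix r hr0 hr1 P Q : Measure X) =
      ENNReal.ofReal r • (P : Measure X) + ENNReal.ofReal (1 - r) • (Q : Measure X) := rfl

lemma mix_swap {r : ℝ} (hr0 : 0 ≤ r) (hr1 : r ≤ 1) (P Q : ProbabilityMeasure X) :
    mix (1 - r) (sub_nonneg.2 hr1) (sub_le_self 1 hr0) Q P = mix r hr0 hr1 P Q :=
  toMeasure_injective <| by simp only [toMeasure_mix, sub_sub_cancel, add_comm]

lemma integral_mix {E : Type*} [NormedAddCommGroup E] [NormedSpace ℝ E] {f : X → E}
    {r : ℝ} (hr0 : 0 ≤ r) (hr1 : r ≤ 1) {P Q : ProbabilityMeasure X}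
    (hP : Integrable f P) (hQ : Integrable f Q) :
    ∫ x, f x ∂(mix r hr0 hr1 P Q : Measure X) =
      r • ∫ x, f x ∂(P : Measure X) + (1 - r) • ∫ x, f x ∂(Q : Measure X) := by
  rw [toMeasure_mix, integral_add_measure (hP.smul_measure ENNReal.ofReal_ne_top)
      (hQ.smul_measure ENNReal.ofReal_ne_top), integral_smul_measure, integral_smul_measure,
    ENNReal.toReal_ofReal hr0, ENNReal.toReal_ofReal (sub_nonneg.2 hr1)]

end MeasureTheory.ProbabilityMeasure

open ProbabilityMeasure

section FiniteSup

variable {ι : Type*} [Finite ι]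

lemma exists_isGreatest_setOf_exists {p : ι → Prop} (g : ι → ℝ) (hp : ∃ a, p a) :
    ∃ a, p a ∧ IsGreatest {y | ∃ a, p a ∧ y = g a} (g a) := by
  obtain ⟨a, ha, hmax⟩ := Set.exists_max_image {a | p a} g (Set.toFinite _) hp
  exact ⟨a, ha, ⟨a, ha, rfl⟩, by rintro _ ⟨b, hb, rfl⟩; exact hmax b hb⟩

lemma measurable_sSup_setOf_exists {X : Type*} [MeasurableSpace X] {p : ι → X → Prop}
    {g : ι → X → ℝ} (hp : ∀ a, MeasurableSet {x | p a x}) (hg : ∀ a, Measurable (g a))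
    (hne : ∀ x, ∃ a, p a x) :
    Measurable fun x => sSup {y | ∃ a, p a x ∧ y = g a x} := by
  refine measurable_of_Ioi fun c => ?_
  have hpre : (fun x => sSup {y | ∃ a, p a x ∧ y = g a x}) ⁻¹' Set.Ioi c =
      ⋃ a, {x | p a x} ∩ {x | c < g a x} := by
    ext x
    simp only [Set.mem_preimage, Set.mem_Ioi, Set.mem_iUnion, Set.mem_inter_iff,
      Set.mem_ofPred_eq]
    obtain ⟨b, hb, hgreatest⟩ := exists_isGreatest_setOf_exists (fun a => g a x) (hne x)
    rw [hgreatest.csSup_eq]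
    exact ⟨fun h => ⟨b, hb, h⟩, fun ⟨a, ha, hc⟩ => hc.trans_le (hgreatest.2 ⟨a, ha, rfl⟩)⟩
  rw [hpre]
  exact .iUnion fun a => (hp a).inter (measurableSet_lt measurable_const (hg a))

end FiniteSup

section Barycentric

variable {S : Type*} [Fintype S]

lemma continuous_stdSimplex_apply (s : S) :
    Continuous fun ν : stdSimplex ℝ S => (ν : S → ℝ) s :=
  (continuous_apply s).comp continuous_subtype_val

lemma integrable_stdSimplex_apply (P : Measure (stdSimplex ℝ S)) [IsFiniteMeasure P] (s : S) :
    Integrable (fun ν : stdSimplex ℝ S => (ν : S → ℝ) s) P :=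
  .of_bound (continuous_stdSimplex_apply s).aestronglyMeasurable 1 <| ae_of_all _ fun ν => by
    rw [Real.norm_of_nonneg (stdSimplex.zero_le ν s)]
    exact stdSimplex.le_one ν s

lemma mix_mem_barycentric {r : ℝ} (hr0 : 0 ≤ r) (hr1 : r ≤ 1) {μ₁ μ₂ : stdSimplex ℝ S}
    {P Q : ProbabilityMeasure (stdSimplex ℝ S)} (hP : P ∈ barycentric μ₁)
    (hQ : Q ∈ barycentric μ₂)
    {μ : stdSimplex ℝ S} (hμ : (μ : S → ℝ) = r • (μ₁ : S → ℝ) + (1 - r) • (μ₂ : S → ℝ)) :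
    mix r hr0 hr1 P Q ∈ barycentric μ := by
  intro s
  rw [integral_mix hr0 hr1 (integrable_stdSimplex_apply _ s) (integrable_stdSimplex_apply _ s),
    hP s, hQ s, hμ]
  rfl

variable {f : stdSimplex ℝ S → ℝ} {C : ℝ}

lemma bddAbove_barycentric_integrals (hC : ∀ ν, |f ν| ≤ C) (μ : stdSimplex ℝ S) :
    BddAbove {x : ℝ | ∃ τ ∈ barycentric μ, x = ∫ ν, f ν ∂(τ : Measure (stdSimplex ℝ S))} := by
  refine ⟨C, ?_⟩
  rintro x ⟨τ, -, rfl⟩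
  have := norm_integral_le_of_norm_le_const (μ := (τ : Measure (stdSimplex ℝ S))) (f := f)
    (ae_of_all _ hC)
  simpa using (le_abs_self _).trans this

theorem integral_eq_sSup_of_mix_eq_sSup (hf : Measurable f) (hC : ∀ ν, |f ν| ≤ C)
    {μ μ₁ μ₂ : stdSimplex ℝ S} {τ τ₁ τ₂ : ProbabilityMeasure (stdSimplex ℝ S)}
    {r : ℝ} (hr0 : 0 < r) (hr1 : r ≤ 1)
    (hτ₁ : τ₁ ∈ barycentric μ₁) (hτ₂ : τ₂ ∈ barycentric μ₂)
    (hmix : τ = mix r hr0.le hr1 τ₁ τ₂)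
    (hμ : (μ : S → ℝ) = r • (μ₁ : S → ℝ) + (1 - r) • (μ₂ : S → ℝ))
    (hopt : ∫ ν, f ν ∂(τ : Measure (stdSimplex ℝ S)) =
      sSup {x : ℝ | ∃ τ' ∈ barycentric μ, x = ∫ ν, f ν ∂(τ' : Measure (stdSimplex ℝ S))}) :
    ∫ ν, f ν ∂(τ₁ : Measure (stdSimplex ℝ S)) =
      sSup {x : ℝ | ∃ τ' ∈ barycentric μ₁, x = ∫ ν, f ν ∂(τ' : Measure (stdSimplex ℝ S))} := by
  have hf_int (P : ProbabilityMeasure (stdSimplex ℝ S)) : Integrable f P :=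
    .of_bound hf.aestronglyMeasurable C (ae_of_all _ hC)
  refine le_antisymm (le_csSup (bddAbove_barycentric_integrals hC μ₁) ⟨τ₁, hτ₁, rfl⟩)
    (csSup_le ⟨_, τ₁, hτ₁, rfl⟩ ?_)
  rintro _ ⟨τ', hτ', rfl⟩
  have hle : ∫ ν, f ν ∂(mix r hr0.le hr1 τ' τ₂ : Measure _) ≤ ∫ ν, f ν ∂(τ : Measure _) :=
    hopt ▸ le_csSup (bddAbove_barycentric_integrals hC μ)
      ⟨_, mix_mem_barycentric hr0.le hr1 hτ' hτ₂ hμ, rfl⟩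
  rw [hmix, integral_mix hr0.le hr1 (hf_int τ') (hf_int τ₂),
    integral_mix hr0.le hr1 (hf_int τ₁) (hf_int τ₂)] at hle
  simp only [smul_eq_mul, add_le_add_iff_right] at hle
  exact le_of_mul_le_mul_left hle hr0

end Barycentric

section SenderGain

variable {S : Type*} [Fintype S]

lemma continuous_expUtil {α : Type*} (u : S → α → ℝ) (a : α) :
    Continuous fun ν : stdSimplex ℝ S => expUtil u ν a :=
  continuous_finsetSum _ fun s _ => continuous_const.mul (continuous_stdSimplex_apply s)

lemma isClosed_setOf_forall_mem_admissible {ι : Type*} {α : ι → Type*}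
    (w : ∀ i, S → α i → ℝ) (a : ∀ i, α i) :
    IsClosed {ν : stdSimplex ℝ S | ∀ i, a i ∈ admissible (w i) ν} := by
  simp only [admissible, Set.mem_ofPred_eq]
  simp only [Set.ofPred_forall]
  exact isClosed_iInter fun i => isClosed_iInter fun b =>
    isClosed_le (continuous_expUtil (w i) b) (continuous_expUtil (w i) (a i))

lemma admissible_nonempty {α : Type*} [Finite α] [Nonempty α] (u : S → α → ℝ)
    (ν : stdSimplex ℝ S) : (admissible u ν).Nonempty :=
  Finite.exists_max (expUtil u ν)

lemma abs_expUtil_le_norm {α : Type*} [Fintype α] (u : S → α → ℝ) (ν : stdSimplex ℝ S)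
    (a : α) : |expUtil u ν a| ≤ ‖u‖ :=
  calc |expUtil u ν a| ≤ ∑ s, |u s a * ν s| := abs_sum_le_sum_abs _ _
    _ ≤ ∑ s, ‖u‖ * ν s := sum_le_sum fun s _ => by
      rw [abs_mul, abs_of_nonneg (stdSimplex.zero_le ν s)]
      exact mul_le_mul_of_nonneg_right ((norm_le_pi_norm (u s) a).trans (norm_le_pi_norm u s))
        (stdSimplex.zero_le ν s)
    _ = ‖u‖ := by rw [← mul_sum, stdSimplex.sum_eq_one, mul_one]

variable {L : Type*} {A : L → Type*} [∀ l, Fintype (A l)]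

lemma exists_forall_mem_admissible [∀ l, Nonempty (A l)] (w : ∀ l, S → A l → ℝ)
    (ν : stdSimplex ℝ S) : ∃ a : ∀ l, A l, ∀ l, a l ∈ admissible (w l) ν :=
  ⟨fun l => (admissible_nonempty (w l) ν).some, fun l => (admissible_nonempty (w l) ν).some_mem⟩

variable [Fintype L] [DecidableEq L] {T : L → Type*} [∀ l, Fintype (T l)]
  (u : ∀ l, T l → S → A l → ℝ) (v : S → (∀ l, A l) → ℝ) (η : ∀ l, T l → ℝ)

lemma measurable_senderGain [∀ l, Nonempty (A l)] : Measurable (senderGain u v η) :=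
  Finset.measurable_sum _ fun t _ =>
    (measurable_sSup_setOf_exists (g := fun a ν => expUtil v ν a)
      (fun a => (isClosed_setOf_forall_mem_admissible (fun l => u l (t l)) a).measurableSet)
      (fun a => (continuous_expUtil v a).measurable)
      (exists_forall_mem_admissible fun l => u l (t l))).const_mul _

lemma abs_senderGain_le [∀ l, Nonempty (A l)] (ν : stdSimplex ℝ S) :
    |senderGain u v η ν| ≤ ∑ t : ∀ l, T l, |∏ l, η l (t l)| * ‖v‖ := by
  refine (abs_sum_le_sum_abs _ _).trans (sum_le_sum fun t _ => ?_)
  obtain ⟨a, -, hgreatest⟩ := exists_isGreatest_setOf_exists (fun a => expUtil v ν a)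
    (exists_forall_mem_admissible (fun l => u l (t l)) ν)
  rw [abs_mul]
  exact mul_le_mul_of_nonneg_left (hgreatest.csSup_eq ▸ abs_expUtil_le_norm v ν a) (abs_nonneg _)

end SenderGain

theorem optimal_decomposition_general {S : Type*} [Fintype S]
    {L : Type*} [Fintype L] [DecidableEq L]
    {A : L → Type*} [∀ l, Fintype (A l)] [∀ l, Nonempty (A l)]
    {T : L → Type*} [∀ l, Fintype (T l)]
    (u : ∀ l, T l → S → A l → ℝ) (v : S → (∀ l, A l) → ℝ)
    (η : ∀ l, T l → ℝ)
    (μ μ₁ μ₂ : stdSimplex ℝ S)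
    (τ τ₁ τ₂ : ProbabilityMeasure (stdSimplex ℝ S)) (r : ℝ) (hr0 : 0 < r) (hr1 : r < 1)
    (hτ₁ : τ₁ ∈ barycentric μ₁) (hτ₂ : τ₂ ∈ barycentric μ₂)
    (hmix : (τ : Measure (stdSimplex ℝ S)) =
      ENNReal.ofReal r • (τ₁ : Measure (stdSimplex ℝ S)) +
        ENNReal.ofReal (1 - r) • (τ₂ : Measure (stdSimplex ℝ S)))
    (hμmix : (μ : S → ℝ) = r • (μ₁ : S → ℝ) + (1 - r) • (μ₂ : S → ℝ))
    (hopt : (∫ ν, senderGain u v η ν ∂(τ : Measure (stdSimplex ℝ S))) =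
      sSup {x : ℝ | ∃ τ' ∈ barycentric μ,
        x = ∫ ν, senderGain u v η ν ∂(τ' : Measure (stdSimplex ℝ S))}) :
    ((∫ ν, senderGain u v η ν ∂(τ₁ : Measure (stdSimplex ℝ S))) =
      sSup {x : ℝ | ∃ τ' ∈ barycentric μ₁,
        x = ∫ ν, senderGain u v η ν ∂(τ' : Measure (stdSimplex ℝ S))}) ∧
    ((∫ ν, senderGain u v η ν ∂(τ₂ : Measure (stdSimplex ℝ S))) =
      sSup {x : ℝ | ∃ τ' ∈ barycentric μ₂,
        x = ∫ ν, senderGain u v η ν ∂(τ' : Measure (stdSimplex ℝ S))}) := by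
  have hW := measurable_senderGain u v η
  have hWC := abs_senderGain_le u v η
  have hτ : τ = mix r hr0.le hr1.le τ₁ τ₂ := toMeasure_injective hmix
  refine ⟨integral_eq_sSup_of_mix_eq_sSup hW hWC hr0 hr1.le hτ₁ hτ₂ hτ hμmix hopt,
    integral_eq_sSup_of_mix_eq_sSup hW hWC (sub_pos.2 hr1) (sub_le_self _ hr0.le) hτ₂ hτ₁
      (hτ.trans (mix_swap hr0.le hr1.le τ₁ τ₂).symm) ?_ hopt⟩
  rw [sub_sub_cancel, hμmix, add_comm]

/-- **decomposition lemma.** If `τ ∈ T_μ` attains `sup_{τ' ∈ T_μ} ∫ W dτ'` and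
`τ = r τ₁ + (1−r) τ₂` with `r ∈ (0,1)`, `τ₁ ∈ T_{μ₁}`, `τ₂ ∈ T_{μ₂}` (so that
`μ = r μ₁ + (1−r) μ₂`), then `τ₁` and `τ₂` attain the corresponding suprema over `T_{μ₁}`
and `T_{μ₂}`. -/
theorem optimal_decomposition {S : Type*} [Fintype S] [Nonempty S]
    {L : Type*} [Fintype L] [DecidableEq L]
    {A : L → Type*} [∀ l, Fintype (A l)] [∀ l, Nonempty (A l)]
    {T : L → Type*} [∀ l, Fintype (T l)] [∀ l, Nonempty (T l)]
    (u : ∀ l, T l → S → A l → ℝ) (v : S → (∀ l, A l) → ℝ)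
    (η : ∀ l, T l → ℝ) (hη : ∀ l, η l ∈ stdSimplex ℝ (T l))
    (μ μ₁ μ₂ : stdSimplex ℝ S)
    (τ τ₁ τ₂ : ProbabilityMeasure (stdSimplex ℝ S)) (r : ℝ) (hr0 : 0 < r) (hr1 : r < 1)
    (hτ : τ ∈ barycentric μ) (hτ₁ : τ₁ ∈ barycentric μ₁) (hτ₂ : τ₂ ∈ barycentric μ₂)
    (hmix : (τ : Measure (stdSimplex ℝ S)) =
      ENNReal.ofReal r • (τ₁ : Measure (stdSimplex ℝ S)) +
        ENNReal.ofReal (1 - r) • (τ₂ : Measure (stdSimplex ℝ S)))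
    (hμmix : (μ : S → ℝ) = r • (μ₁ : S → ℝ) + (1 - r) • (μ₂ : S → ℝ))
    (hopt : (∫ ν, senderGain u v η ν ∂(τ : Measure (stdSimplex ℝ S))) =
      sSup {x : ℝ | ∃ τ' ∈ barycentric μ,
        x = ∫ ν, senderGain u v η ν ∂(τ' : Measure (stdSimplex ℝ S))}) :
    ((∫ ν, senderGain u v η ν ∂(τ₁ : Measure (stdSimplex ℝ S))) =
      sSup {x : ℝ | ∃ τ' ∈ barycentric μ₁,
        x = ∫ ν, senderGain u v η ν ∂(τ' : Measure (stdSimplex ℝ S))}) ∧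
    ((∫ ν, senderGain u v η ν ∂(τ₂ : Measure (stdSimplex ℝ S))) =
      sSup {x : ℝ | ∃ τ' ∈ barycentric μ₂,
        x = ∫ ν, senderGain u v η ν ∂(τ' : Measure (stdSimplex ℝ S))}) :=
  optimal_decomposition_general u v η μ μ₁ μ₂ τ τ₁ τ₂ r hr0 hr1 hτ₁ hτ₂ hmix hμmix hopt

end
end

section
/- Let μ ∈ Δ(S) and let τ = Σ_{m=1}^{M} ρ_m δ_{ν_m}, with ρ ∈ Δ({1,…,M}) and ν_m ∈ Δ(S) satisfying Σ_m ρ_m ν_m = μ, attain the supremum sup_{τ' ∈ T_μ} ∫_{Δ(S)} W(ν) dτ'(ν). Then for every m with ρ_m > 0 one has W(ν_m) = Ŵ(ν_m), where Ŵ(ν) = sup_{τ' ∈ T_ν} ∫_{Δ(S)} W dτ'. -/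
open MeasureTheory Finset

noncomputable section

/-- The concavification `Ŵ(μ) = sup_{τ ∈ T_μ} ∫ W dτ`. -/
def concavification {S L : Type*} [Fintype S] [Fintype L] [DecidableEq L]
    {A T : L → Type*} [∀ l, Fintype (A l)] [∀ l, Fintype (T l)]
    (u : ∀ l, T l → S → A l → ℝ) (v : S → (∀ l, A l) → ℝ) (η : ∀ l, T l → ℝ)
    (μ : stdSimplex ℝ S) : ℝ :=
  sSup {x : ℝ | ∃ τ ∈ barycentric μ,
    x = ∫ ν, senderGain u v η ν ∂(τ : Measure (stdSimplex ℝ S))}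

set_option linter.unusedSectionVars false
set_option linter.unusedVariables false

open scoped Classical

section Aux
variable {S L : Type*} [Fintype S] [Nonempty S] [Fintype L] [DecidableEq L]
    {A T : L → Type*} [∀ l, Fintype (A l)] [∀ l, Nonempty (A l)]
    [∀ l, Fintype (T l)] [∀ l, Nonempty (T l)]
    (u : ∀ l, T l → S → A l → ℝ) (v : S → (∀ l, A l) → ℝ) (η : ∀ l, T l → ℝ)

lemma coord_continuous (s : S) : Continuous (fun ν : stdSimplex ℝ S => (ν : S → ℝ) s) :=
  (continuous_apply s).comp continuous_subtype_val

lemma expUtil_continuous {α : Type*} (u0 : S → α → ℝ) (a : α) :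
    Continuous (fun ν : stdSimplex ℝ S => expUtil u0 ν a) := by
  unfold expUtil
  exact continuous_finset_sum _ fun s _ => continuous_const.mul (coord_continuous s)

lemma payoff_continuous (a : ∀ l, A l) :
    Continuous (fun ν : stdSimplex ℝ S => ∑ s, v s a * (ν : S → ℝ) s) :=
  continuous_finset_sum _ fun s _ => continuous_const.mul (coord_continuous s)

lemma admissible_measurable {α : Type*} [Fintype α] (u0 : S → α → ℝ) (a : α) :
    MeasurableSet {ν : stdSimplex ℝ S | a ∈ admissible u0 ν} := by
  have h : {ν : stdSimplex ℝ S | a ∈ admissible u0 ν}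
      = ⋂ b, {ν : stdSimplex ℝ S | expUtil u0 ν b ≤ expUtil u0 ν a} := by
    ext ν; simp [admissible, Set.mem_iInter]
  rw [h]
  exact MeasurableSet.iInter fun b =>
    (isClosed_le (expUtil_continuous u0 b) (expUtil_continuous u0 a)).measurableSet

lemma admissible_nonempty_s7 (t : ∀ l, T l) (ν : stdSimplex ℝ S) :
    ∃ a : ∀ l, A l, ∀ l, a l ∈ admissible (u l (t l)) ν := by
  have h : ∀ l, ∃ a : A l, a ∈ admissible (u l (t l)) ν := by
    intro l
    obtain ⟨a, -, ha⟩ := Finset.exists_max_image Finset.univ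
      (fun a : A l => expUtil (u l (t l)) ν a) Finset.univ_nonempty
    exact ⟨a, fun b => ha b (Finset.mem_univ b)⟩
  choose a ha using h
  exact ⟨a, ha⟩

/-- rewriting the sSup over admissible profiles as a `Finset.sup'`. -/
lemma sSup_eq_sup' (t : ∀ l, T l) (ν : stdSimplex ℝ S) :
    sSup {x : ℝ | ∃ a : ∀ l, A l, (∀ l, a l ∈ admissible (u l (t l)) ν) ∧
        x = ∑ s, v s a * (ν : S → ℝ) s}
      = Finset.univ.sup' Finset.univ_nonempty (fun a : ∀ l, A l =>
          if (∀ l, a l ∈ admissible (u l (t l)) ν) then ∑ s, v s a * (ν : S → ℝ) s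
          else Finset.univ.inf' Finset.univ_nonempty
            (fun b : ∀ l, A l => ∑ s, v s b * (ν : S → ℝ) s)) := by
  set f : (∀ l, A l) → ℝ := fun a => ∑ s, v s a * (ν : S → ℝ) s with hf
  have hbdd : BddAbove {x : ℝ | ∃ a : ∀ l, A l,
      (∀ l, a l ∈ admissible (u l (t l)) ν) ∧ x = f a} := by
    apply Set.Finite.bddAbove
    apply (Set.finite_range f).subset
    rintro x ⟨a, -, rfl⟩; exact ⟨a, rfl⟩
  obtain ⟨a₀, ha₀⟩ := admissible_nonempty_s7 u t ν
  apply le_antisymm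
  · refine csSup_le ?_ ?_
    · exact ⟨f a₀, a₀, ha₀, rfl⟩
    rintro x ⟨a, ha, rfl⟩
    refine le_trans ?_ (Finset.le_sup' _ (Finset.mem_univ a))
    rw [if_pos ha]
  · apply Finset.sup'_le
    intro a _
    by_cases ha : ∀ l, a l ∈ admissible (u l (t l)) ν
    · rw [if_pos ha]; exact le_csSup hbdd ⟨a, ha, rfl⟩
    · rw [if_neg ha]
      refine le_trans (Finset.inf'_le _ (Finset.mem_univ a₀)) (le_csSup hbdd ⟨a₀, ha₀, rfl⟩)

lemma senderGain_measurable : Measurable (senderGain u v η) := by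
  unfold senderGain
  apply Finset.measurable_sum
  intro t _
  apply Measurable.const_mul
  have h : (fun ν : stdSimplex ℝ S => sSup {x : ℝ | ∃ a : ∀ l, A l,
      (∀ l, a l ∈ admissible (u l (t l)) ν) ∧ x = ∑ s, v s a * (ν : S → ℝ) s})
      = Finset.univ.sup' Finset.univ_nonempty (fun (a : ∀ l, A l) ν =>
          if (∀ l, a l ∈ admissible (u l (t l)) ν) then ∑ s, v s a * (ν : S → ℝ) s
          else Finset.univ.inf' Finset.univ_nonempty
            (fun b : ∀ l, A l => ∑ s, v s b * (ν : S → ℝ) s)) := by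
    funext ν
    rw [sSup_eq_sup' u v t ν, Finset.sup'_apply]
  rw [h]
  apply Finset.measurable_sup' Finset.univ_nonempty
  intro a _
  apply Measurable.ite
  · have : {ν : stdSimplex ℝ S | ∀ l, a l ∈ admissible (u l (t l)) ν}
        = ⋂ l, {ν : stdSimplex ℝ S | a l ∈ admissible (u l (t l)) ν} := by
      ext ν; simp [Set.mem_iInter]
    rw [this]
    exact MeasurableSet.iInter fun l => admissible_measurable (u l (t l)) (a l)
  · exact (payoff_continuous v a).measurable
  · have h2 : (fun ν : stdSimplex ℝ S => Finset.univ.inf' Finset.univ_nonempty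
        (fun b : ∀ l, A l => ∑ s, v s b * (ν : S → ℝ) s))
        = Finset.univ.inf' Finset.univ_nonempty
            (fun (b : ∀ l, A l) (ν : stdSimplex ℝ S) => ∑ s, v s b * (ν : S → ℝ) s) := by
      funext ν; rw [Finset.inf'_apply]
    rw [h2]
    exact Finset.inf'_induction _ _ (fun p hp q hq => hp.inf' hq)
      fun b _ => (payoff_continuous v b).measurable

/-- a uniform bound for the sender's payoff function. -/
def payoffBound (v : S → (∀ l, A l) → ℝ) : ℝ :=
  Finset.univ.sup' Finset.univ_nonempty (fun a : ∀ l, A l => ∑ s, |v s a|)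

lemma coord_mem_Icc (ν : stdSimplex ℝ S) (s : S) : (ν : S → ℝ) s ∈ Set.Icc (0:ℝ) 1 := by
  constructor
  · exact ν.2.1 s
  · calc (ν : S → ℝ) s ≤ ∑ s', (ν : S → ℝ) s' :=
        Finset.single_le_sum (fun s' _ => ν.2.1 s') (Finset.mem_univ s)
    _ = 1 := ν.2.2

lemma abs_payoff_le (a : ∀ l, A l) (ν : stdSimplex ℝ S) :
    |∑ s, v s a * (ν : S → ℝ) s| ≤ payoffBound v := by
  refine le_trans (Finset.abs_sum_le_sum_abs _ _) ?_
  refine le_trans ?_ (Finset.le_sup' (fun a : ∀ l, A l => ∑ s, |v s a|) (Finset.mem_univ a))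
  apply Finset.sum_le_sum
  intro s _
  rw [abs_mul]
  have h01 := coord_mem_Icc ν s
  calc |v s a| * |(ν : S → ℝ) s| ≤ |v s a| * 1 := by
        apply mul_le_mul_of_nonneg_left _ (abs_nonneg _)
        rw [abs_of_nonneg h01.1]; exact h01.2
  _ = |v s a| := mul_one _

lemma abs_sSup_le (t : ∀ l, T l) (ν : stdSimplex ℝ S) :
    |sSup {x : ℝ | ∃ a : ∀ l, A l, (∀ l, a l ∈ admissible (u l (t l)) ν) ∧
        x = ∑ s, v s a * (ν : S → ℝ) s}| ≤ payoffBound v := by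
  rw [sSup_eq_sup' u v t ν, abs_le]
  constructor
  · obtain ⟨a₀⟩ := (inferInstance : Nonempty (∀ l, A l))
    refine le_trans ?_ (Finset.le_sup' _ (Finset.mem_univ a₀))
    by_cases h : ∀ l, a₀ l ∈ admissible (u l (t l)) ν
    · rw [if_pos h]; exact neg_le_of_abs_le (abs_payoff_le v a₀ ν)
    · rw [if_neg h]
      apply Finset.le_inf'
      intro b _
      exact neg_le_of_abs_le (abs_payoff_le v b ν)
  · apply Finset.sup'_le
    intro a _
    by_cases h : ∀ l, a l ∈ admissible (u l (t l)) ν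
    · rw [if_pos h]; exact le_of_abs_le (abs_payoff_le v a ν)
    · rw [if_neg h]
      obtain ⟨a₀⟩ := (inferInstance : Nonempty (∀ l, A l))
      exact le_trans (Finset.inf'_le _ (Finset.mem_univ a₀)) (le_of_abs_le (abs_payoff_le v a₀ ν))

def gainBound (v : S → (∀ l, A l) → ℝ) (η : ∀ l, T l → ℝ) : ℝ :=
  ∑ t : ∀ l, T l, |∏ l, η l (t l)| * payoffBound v

lemma abs_senderGain_le_s7 (ν : stdSimplex ℝ S) :
    ‖senderGain u v η ν‖ ≤ gainBound v η := by
  rw [Real.norm_eq_abs]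
  unfold senderGain gainBound
  refine le_trans (Finset.abs_sum_le_sum_abs _ _) ?_
  apply Finset.sum_le_sum
  intro t _
  rw [abs_mul]
  exact mul_le_mul_of_nonneg_left (abs_sSup_le u v t ν) (abs_nonneg _)

lemma senderGain_integrable (P : Measure (stdSimplex ℝ S)) [IsFiniteMeasure P] :
    Integrable (senderGain u v η) P :=
  ⟨(senderGain_measurable u v η).aestronglyMeasurable,
    HasFiniteIntegral.of_bounded (ae_of_all _ (abs_senderGain_le_s7 u v η))⟩

lemma coord_integrable (s : S) (P : Measure (stdSimplex ℝ S)) [IsFiniteMeasure P] :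
    Integrable (fun ν : stdSimplex ℝ S => (ν : S → ℝ) s) P :=
  ⟨(coord_continuous s).measurable.aestronglyMeasurable,
    HasFiniteIntegral.of_bounded (C := 1) (ae_of_all _ (fun ν => by
      rw [Real.norm_eq_abs, abs_of_nonneg (coord_mem_Icc ν s).1]
      exact (coord_mem_Icc ν s).2))⟩

lemma integral_mix {S : Type*} [Fintype S] {M : ℕ} (ρ : Fin M → ℝ) (hρ0 : ∀ k, 0 ≤ ρ k)
    (comp : Fin M → Measure (stdSimplex ℝ S))
    (f : stdSimplex ℝ S → ℝ) (hf : ∀ k, Integrable f (comp k)) :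
    ∫ x, f x ∂(∑ k, ENNReal.ofReal (ρ k) • comp k) = ∑ k, ρ k * ∫ x, f x ∂(comp k) := by
  rw [integral_finset_sum_measure
    (fun k _ => (hf k).smul_measure ENNReal.ofReal_ne_top)]
  refine Finset.sum_congr rfl fun k _ => ?_
  rw [integral_smul_measure, ENNReal.toReal_ofReal (hρ0 k), smul_eq_mul]

end Aux

/-- If `τ = Σ_{m=1}^M ρ_m δ_{ν_m}` (with `ρ ∈ Δ({1,…,M})` and
`Σ_m ρ_m ν_m = μ`) attains `sup_{τ' ∈ T_μ} ∫ W dτ'`, then `W(ν_m) = Ŵ(ν_m)` for every `m`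
with `ρ_m > 0`. -/


theorem optimal_atoms_touch_concavification {S : Type*} [Fintype S] [Nonempty S]
    {L : Type*} [Fintype L] [DecidableEq L]
    {A : L → Type*} [∀ l, Fintype (A l)] [∀ l, Nonempty (A l)]
    {T : L → Type*} [∀ l, Fintype (T l)] [∀ l, Nonempty (T l)]
    (u : ∀ l, T l → S → A l → ℝ) (v : S → (∀ l, A l) → ℝ)
    (η : ∀ l, T l → ℝ) (hη : ∀ l, η l ∈ stdSimplex ℝ (T l))
    (μ : stdSimplex ℝ S) (M : ℕ)
    (ρ : Fin M → ℝ) (hρ : ρ ∈ stdSimplex ℝ (Fin M)) (ν : Fin M → stdSimplex ℝ S)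
    (hbary : ∀ s, (∑ m, ρ m * (ν m : S → ℝ) s) = (μ : S → ℝ) s)
    (τ : ProbabilityMeasure (stdSimplex ℝ S))
    (hτ : (τ : Measure (stdSimplex ℝ S)) =
      ∑ m, ENNReal.ofReal (ρ m) • Measure.dirac (ν m))
    (hopt : (∫ ν', senderGain u v η ν' ∂(τ : Measure (stdSimplex ℝ S))) =
      sSup {x : ℝ | ∃ τ' ∈ barycentric μ,
        x = ∫ ν', senderGain u v η ν' ∂(τ' : Measure (stdSimplex ℝ S))}) :
    ∀ m, 0 < ρ m → senderGain u v η (ν m) = concavification u v η (ν m) := by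
  intro m hm
  set W := senderGain u v η with hW
  -- integrals of W against a probability measure are uniformly bounded
  have Wbound : ∀ P : ProbabilityMeasure (stdSimplex ℝ S),
      (∫ ν', W ν' ∂(P : Measure (stdSimplex ℝ S))) ≤ gainBound v η := by
    intro P
    refine le_trans (le_abs_self _) ?_
    rw [← Real.norm_eq_abs]
    calc ‖∫ ν', W ν' ∂(P : Measure (stdSimplex ℝ S))‖
        ≤ gainBound v η * ((P : Measure (stdSimplex ℝ S)) Set.univ).toReal :=
          norm_integral_le_of_norm_le_const (ae_of_all _ (abs_senderGain_le_s7 u v η))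
      _ = gainBound v η := by simp
  -- the dirac measure at any point, as a probability measure
  have diracMem : ∀ x : stdSimplex ℝ S,
      (⟨Measure.dirac x, inferInstance⟩ : ProbabilityMeasure (stdSimplex ℝ S)) ∈
        barycentric x := by
    intro x s
    exact integral_dirac _ x
  -- key step: any barycentric decomposition of ν m integrates W to at most W (ν m)
  have key : ∀ τ' : ProbabilityMeasure (stdSimplex ℝ S), τ' ∈ barycentric (ν m) →
      (∫ ν', W ν' ∂(τ' : Measure (stdSimplex ℝ S))) ≤ W (ν m) := by
    intro τ' hτ'
    set comp : Fin M → Measure (stdSimplex ℝ S) :=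
      fun k => if k = m then (τ' : Measure (stdSimplex ℝ S)) else Measure.dirac (ν k)
      with hcomp
    have hcompProb : ∀ k, IsProbabilityMeasure (comp k) := by
      intro k
      simp only [hcomp]
      split <;> infer_instance
    set κ : Measure (stdSimplex ℝ S) := ∑ k, ENNReal.ofReal (ρ k) • comp k with hκ
    have hκprob : IsProbabilityMeasure κ := by
      constructor
      rw [hκ, Measure.finset_sum_apply]
      have : ∀ k : Fin M, (ENNReal.ofReal (ρ k) • comp k) Set.univ = ENNReal.ofReal (ρ k) := by
        intro k
        have := (hcompProb k).measure_univ
        rw [Measure.smul_apply, this, smul_eq_mul, mul_one]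
      simp only [this]
      rw [← ENNReal.ofReal_sum_of_nonneg (fun k _ => hρ.1 k), hρ.2, ENNReal.ofReal_one]
    have hval : ∀ (s : S) (k : Fin M),
        (∫ ν', (ν' : S → ℝ) s ∂(comp k)) = (ν k : S → ℝ) s := by
      intro s k
      simp only [hcomp]
      by_cases hk : k = m
      · rw [if_pos hk, hk]; exact hτ' s
      · rw [if_neg hk]; exact integral_dirac _ (ν k)
    have hκbary : (⟨κ, hκprob⟩ : ProbabilityMeasure (stdSimplex ℝ S)) ∈ barycentric μ := by
      intro s
      show (∫ ν', (ν' : S → ℝ) s ∂κ) = (μ : S → ℝ) s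
      rw [hκ, integral_mix ρ hρ.1 comp _ (fun k => by
        have := hcompProb k
        exact coord_integrable s (comp k))]
      simp only [hval s]
      exact hbary s
    -- the integral of W against κ is a member of the sup set
    have hWcomp : ∀ k, Integrable W (comp k) := fun k => by
      have := hcompProb k
      exact senderGain_integrable u v η (comp k)
    have hκint : (∫ ν', W ν' ∂κ) = ∑ k, ρ k * (∫ ν', W ν' ∂(comp k)) := by
      rw [hκ]; exact integral_mix ρ hρ.1 comp _ hWcomp
    have hτint : (∫ ν', W ν' ∂(τ : Measure (stdSimplex ℝ S)))
        = ∑ k, ρ k * W (ν k) := by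
      rw [hτ, integral_mix ρ hρ.1 (fun k => Measure.dirac (ν k)) _
        (fun k => senderGain_integrable u v η _)]
      refine Finset.sum_congr rfl fun k _ => ?_
      rw [integral_dirac]
    -- the sup set is bounded above
    have hbddsup : BddAbove {x : ℝ | ∃ τ'' ∈ barycentric μ,
        x = ∫ ν', W ν' ∂(τ'' : Measure (stdSimplex ℝ S))} := by
      refine ⟨gainBound v η, ?_⟩
      rintro x ⟨τ'', -, rfl⟩
      exact Wbound τ''
    have hmem : (∫ ν', W ν' ∂κ) ∈ {x : ℝ | ∃ τ'' ∈ barycentric μ,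
        x = ∫ ν', W ν' ∂(τ'' : Measure (stdSimplex ℝ S))} :=
      ⟨⟨κ, hκprob⟩, hκbary, rfl⟩
    have hle : (∫ ν', W ν' ∂κ) ≤ ∑ k, ρ k * W (ν k) := by
      rw [← hτint, hopt]
      exact le_csSup hbddsup hmem
    rw [hκint] at hle
    -- compare the two sums term by term
    have hsum : ∀ (c : Fin M → ℝ), (∑ k, ρ k * c k)
        = ρ m * c m + ∑ k ∈ Finset.univ.erase m, ρ k * c k := by
      intro c
      exact (Finset.add_sum_erase Finset.univ (fun k => ρ k * c k)
        (Finset.mem_univ m)).symm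
    rw [hsum (fun k => ∫ ν', W ν' ∂(comp k)), hsum (fun k => W (ν k))] at hle
    have herase : ∑ k ∈ Finset.univ.erase m, ρ k * (∫ ν', W ν' ∂(comp k))
        = ∑ k ∈ Finset.univ.erase m, ρ k * W (ν k) := by
      refine Finset.sum_congr rfl fun k hk => ?_
      have hkm : k ≠ m := Finset.ne_of_mem_erase hk
      simp only [hcomp, if_neg hkm]
      rw [integral_dirac]
    rw [herase] at hle
    have h2 : ρ m * (∫ ν', W ν' ∂(comp m)) ≤ ρ m * W (ν m) :=
      le_of_add_le_add_right hle
    have h3 : (∫ ν', W ν' ∂(comp m)) ≤ W (ν m) :=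
      le_of_mul_le_mul_left h2 hm
    have : comp m = (τ' : Measure (stdSimplex ℝ S)) := by simp [hcomp]
    rwa [this] at h3
  -- conclusion
  have hbdd2 : BddAbove {x : ℝ | ∃ τ' ∈ barycentric (ν m),
      x = ∫ ν', W ν' ∂(τ' : Measure (stdSimplex ℝ S))} := by
    refine ⟨W (ν m), ?_⟩
    rintro x ⟨τ', hτ', rfl⟩
    exact key τ' hτ'
  have hdiracInt : (∫ ν', W ν' ∂(Measure.dirac (ν m))) = W (ν m) := integral_dirac _ _
  have hmem2 : W (ν m) ∈ {x : ℝ | ∃ τ' ∈ barycentric (ν m),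
      x = ∫ ν', W ν' ∂(τ' : Measure (stdSimplex ℝ S))} :=
    ⟨⟨Measure.dirac (ν m), inferInstance⟩, diracMem (ν m), hdiracInt.symm⟩
  refine le_antisymm (le_csSup hbdd2 hmem2) ?_
  refine csSup_le ⟨W (ν m), hmem2⟩ ?_
  rintro x ⟨τ', hτ', rfl⟩
  exact key τ' hτ'

end
end
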